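/- Let m be a prime number greater than 3 and let D_m be the dihedral group of order 2m. Then for any three subgroups H₁, H₂, H₃ of D_m satisfying the triple product property, |H₁|·|H₂|·|H₃| ≤ 2m. (That is, no three subgroups of D_m prove that its pseudo-exponent is less than 3.) -/

import Mathlib

/-!
For subgroups, the triple product property makes the map `H₁ × H₂ → G`, `(a, b) ↦ ab` injective,
so `|Hᵢ| |Hⱼ| ≤ |G|` for any two of them. Moreover a subgroup `K` of index two cannot occur
together with two nontrivial subgroups: these meet `K` trivially, so they contain elements
`s, t ∉ K`, and then `st ∈ K` and `(st)⁻¹ · s · t = 1`.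

In a group of order `2p` the subgroup orders are `1, 2, p, 2p`. A trivial factor reduces the claim
to the pairwise bound, which also excludes order `2p` next to a nontrivial subgroup; order `p`
means index two. So otherwise all three orders are `2`, and `8 ≤ 2p` once `p ≥ 4`.
-/

/-- The right quotient set `Q(S) = {s₁s₂⁻¹ : s₁, s₂ ∈ S}` of a subset of a group. -/
def rightQuotient {G : Type*} [Group G] (S : Set G) : Set G :=
  {g | ∃ s₁ ∈ S, ∃ s₂ ∈ S, g = s₁ * s₂⁻¹}

/-- Subsets `S₁, S₂, S₃` of a group satisfy the triple product property if whenever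
`qᵢ ∈ Q(Sᵢ)` and `q₁q₂q₃ = 1`, we have `q₁ = q₂ = q₃ = 1`. -/
def TPP {G : Type*} [Group G] (S₁ S₂ S₃ : Set G) : Prop :=
  ∀ q₁ ∈ rightQuotient S₁, ∀ q₂ ∈ rightQuotient S₂, ∀ q₃ ∈ rightQuotient S₃,
    q₁ * q₂ * q₃ = 1 → q₁ = 1 ∧ q₂ = 1 ∧ q₃ = 1

/-- A group `G` realizes `⟨n₁, n₂, n₃⟩` if there are finite subsets `Sᵢ ⊆ G` with
`|Sᵢ| = nᵢ` satisfying the triple product property. -/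
def Realizes (G : Type*) [Group G] (n₁ n₂ n₃ : ℕ) : Prop :=
  ∃ S₁ S₂ S₃ : Set G, S₁.Finite ∧ S₂.Finite ∧ S₃.Finite ∧
    S₁.ncard = n₁ ∧ S₂.ncard = n₂ ∧ S₃.ncard = n₃ ∧ TPP S₁ S₂ S₃

variable {G : Type*} [Group G]

theorem rightQuotient_coe_subgroup (H : Subgroup G) : rightQuotient (H : Set G) = H := by
  ext g
  refine ⟨?_, fun hg => ⟨g, hg, 1, H.one_mem, by rw [inv_one, mul_one]⟩⟩
  rintro ⟨a, ha, b, hb, rfl⟩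
  exact H.mul_mem ha (H.inv_mem hb)

theorem Nat.Prime.eq_one_or_two_or_self_or_two_mul_of_dvd_two_mul {p d : ℕ} (hp : p.Prime)
    (hd : d ∣ 2 * p) : d = 1 ∨ d = 2 ∨ d = p ∨ d = 2 * p := by
  obtain ⟨a, b, ha, hb, rfl⟩ := Nat.dvd_mul.mp hd
  rcases (Nat.dvd_prime Nat.prime_two).mp ha with rfl | rfl <;>
    rcases (Nat.dvd_prime hp).mp hb with rfl | rfl <;> simp

namespace TPP

theorem rotate {S₁ S₂ S₃ : Set G} (h : TPP S₁ S₂ S₃) : TPP S₂ S₃ S₁ := by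
  intro q₂ hq₂ q₃ hq₃ q₁ hq₁ hq
  rw [mul_eq_one_comm, ← mul_assoc] at hq
  obtain ⟨h₁, h₂, h₃⟩ := h q₁ hq₁ q₂ hq₂ q₃ hq₃ hq
  exact ⟨h₂, h₃, h₁⟩

variable {H₁ H₂ H₃ : Subgroup G}

theorem eq_one_of_mul_eq_one (h : TPP (H₁ : Set G) H₂ H₃) {a b c : G} (ha : a ∈ H₁)
    (hb : b ∈ H₂) (hc : c ∈ H₃) (habc : a * b * c = 1) : a = 1 ∧ b = 1 ∧ c = 1 := by
  simp only [TPP, rightQuotient_coe_subgroup, SetLike.mem_coe] at h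
  exact h a ha b hb c hc habc

theorem disjoint (h : TPP (H₁ : Set G) H₂ H₃) : Disjoint H₁ H₂ :=
  Subgroup.disjoint_def.mpr fun hx₁ hx₂ =>
    (h.eq_one_of_mul_eq_one hx₁ (H₂.inv_mem hx₂) H₃.one_mem (by group)).1

theorem card_mul_card_le [Finite G] (h : TPP (H₁ : Set G) H₂ H₃) :
    Nat.card H₁ * Nat.card H₂ ≤ Nat.card G := by
  rw [← Nat.card_prod]
  exact Nat.card_le_card_of_injective _ (Subgroup.mul_injective_of_disjoint h.disjoint)

theorem eq_bot_of_index_eq_two (h : TPP (H₁ : Set G) H₂ H₃) (hH₁ : H₁.index = 2)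
    (hH₂ : H₂ ≠ ⊥) : H₃ = ⊥ := by
  by_contra hH₃
  obtain ⟨s, hs₂, hs₁⟩ := SetLike.not_le_iff_exists.mp
    fun hle => hH₂ (h.disjoint.eq_bot_of_ge hle)
  obtain ⟨t, ht₃, ht₁⟩ := SetLike.not_le_iff_exists.mp
    fun hle => hH₃ (h.rotate.rotate.disjoint.eq_bot_of_le hle)
  have hst : s * t ∈ H₁ := (Subgroup.mul_mem_iff_of_index_two hH₁).mpr (iff_of_false hs₁ ht₁)
  have hs : s = 1 := (h.eq_one_of_mul_eq_one (H₁.inv_mem hst) hs₂ ht₃ (by group)).2.1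
  exact hs₁ (hs ▸ H₁.one_mem)

theorem card_eq_two_of_card_eq_two_mul_prime [Finite G] {p : ℕ} (hp : p.Prime)
    (hG : Nat.card G = 2 * p) (h : TPP (H₁ : Set G) H₂ H₃) (h₁ : Nat.card H₁ ≠ 1)
    (h₂ : Nat.card H₂ ≠ 1) (h₃ : Nat.card H₃ ≠ 1) : Nat.card H₁ = 2 := by
  have hdvd : Nat.card H₁ ∣ 2 * p := hG ▸ Subgroup.card_subgroup_dvd_card H₁
  rcases hp.eq_one_or_two_or_self_or_two_mul_of_dvd_two_mul hdvd with hc | hc | hc | hc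
  · exact absurd hc h₁
  · exact hc
  · have hindex : H₁.index = 2 :=
      Nat.eq_of_mul_eq_mul_right hp.pos (by rw [← hG, ← H₁.index_mul_card, hc])
    exact absurd (H₃.eq_bot_iff_card.mp (h.eq_bot_of_index_eq_two hindex
      (H₂.eq_bot_iff_card.not.mpr h₂))) h₃
  · have hpair := h.card_mul_card_le
    have h₂two : 2 ≤ Nat.card H₂ := by
      have : 0 < Nat.card H₂ := Nat.card_pos
      omega
    rw [hc, hG] at hpair
    nlinarith [hp.pos]

theorem card_mul_card_mul_card_le_of_card_eq_two_mul_prime [Finite G] {p : ℕ} (hp : p.Prime)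
    (hp4 : 4 ≤ p) (hG : Nat.card G = 2 * p) (h : TPP (H₁ : Set G) H₂ H₃) :
    Nat.card H₁ * Nat.card H₂ * Nat.card H₃ ≤ 2 * p := by
  rcases eq_or_ne (Nat.card H₁) 1 with h₁ | h₁
  · simpa [h₁, hG] using h.rotate.card_mul_card_le
  rcases eq_or_ne (Nat.card H₂) 1 with h₂ | h₂
  · simpa [h₂, hG, mul_comm] using h.rotate.rotate.card_mul_card_le
  rcases eq_or_ne (Nat.card H₃) 1 with h₃ | h₃
  · simpa [h₃, hG] using h.card_mul_card_le
  rw [h.card_eq_two_of_card_eq_two_mul_prime hp hG h₁ h₂ h₃,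
    h.rotate.card_eq_two_of_card_eq_two_mul_prime hp hG h₂ h₃ h₁,
    h.rotate.rotate.card_eq_two_of_card_eq_two_mul_prime hp hG h₃ h₁ h₂]
  omega

end TPP

theorem stmt_17 (m : ℕ) (hm : m.Prime) (h3 : 3 < m)
    (H₁ H₂ H₃ : Subgroup (DihedralGroup m))
    (htpp : TPP (H₁ : Set (DihedralGroup m)) (H₂ : Set (DihedralGroup m))
      (H₃ : Set (DihedralGroup m))) :
    Nat.card H₁ * Nat.card H₂ * Nat.card H₃ ≤ 2 * m := by
  have : NeZero m := ⟨hm.ne_zero⟩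
  exact htpp.card_mul_card_mul_card_le_of_card_eq_two_mul_prime hm h3
    (by rw [Nat.card_eq_fintype_card, DihedralGroup.card])
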